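/- The Cayley cubic V(t_0t_1t_2 + t_0t_1t_3 + t_0t_2t_3 + t_1t_2t_3) contains exactly nine lines: the six lines e_ie_j through pairs of coordinate points, and three further lines. -/

import Mathlib

open MvPolynomial

/-- The Cayley cubic form `t₀t₁t₂ + t₀t₁t₃ + t₀t₂t₃ + t₁t₂t₃`. -/
noncomputable def cayley : MvPolynomial (Fin 4) ℂ :=
  X 0 * X 1 * X 2 + X 0 * X 1 * X 3 + X 0 * X 2 * X 3 + X 1 * X 2 * X 3

/-- The coordinate vector `e_i ∈ ℂ^4`. -/
noncomputable def e (i : Fin 4) : Fin 4 → ℂ := Pi.single i 1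

/-! ### Auxiliary lemmas about linear polynomials -/

/-- linear polynomial `a X + b` -/
noncomputable def lin (a b : ℂ) : Polynomial ℂ :=
  Polynomial.C a * Polynomial.X + Polynomial.C b

lemma lin_coeff1 (a b : ℂ) : (lin a b).coeff 1 = a := by
  simp [lin]

lemma lin_coeff0 (a b : ℂ) : (lin a b).coeff 0 = b := by
  simp [lin]

lemma lin_ne_zero {a : ℂ} (b : ℂ) (ha : a ≠ 0) : lin a b ≠ 0 := by
  intro h
  have := lin_coeff1 a b
  rw [h] at this
  simp at this
  exact ha this.symm

lemma lin_eval (a b x : ℂ) : (lin a b).eval x = a * x + b := by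
  simp [lin]

lemma lin_root {a : ℂ} (b : ℂ) (ha : a ≠ 0) : (lin a b).eval (-b / a) = 0 := by
  rw [lin_eval]; field_simp; ring

lemma lin_eq_zero_iff {a b : ℂ} : lin a b = 0 ↔ a = 0 ∧ b = 0 := by
  constructor
  · intro h
    constructor
    · have := lin_coeff1 a b; rw [h] at this; simpa using this.symm
    · have := lin_coeff0 a b; rw [h] at this; simpa using this.symm
  · rintro ⟨rfl, rfl⟩; simp [lin]

lemma lin_add_eq_zero {a b a' b' : ℂ} (h : lin a b + lin a' b' = 0) :
    a + a' = 0 ∧ b + b' = 0 := by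
  constructor
  · have := congrArg (fun q => Polynomial.coeff q 1) h; simpa [lin] using this
  · have := congrArg (fun q => Polynomial.coeff q 0) h; simpa [lin] using this

/-- scaling: a nonzero polynomial of degree ≤ 1 vanishing at the root of `lin a b`
is a scalar multiple of it. -/
lemma scale {a : ℂ} (b : ℂ) (ha : a ≠ 0) {p : Polynomial ℂ} (hd : p.degree ≤ 1)
    (hp : p ≠ 0) (hr : p.eval (-b / a) = 0) :
    ∃ c : ℂ, c ≠ 0 ∧ p = Polynomial.C c * lin a b := by
  have hp1 := Polynomial.eq_X_add_C_of_degree_le_one hd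
  set u := p.coeff 1 with hu'
  set w := p.coeff 0 with hw'
  have hu : u ≠ 0 := by
    intro h
    rw [h] at hp1
    simp at hp1
    rw [hp1] at hr
    simp at hr
    exact hp (by rw [hp1, hr, map_zero])
  have hw : w = u * b / a := by
    rw [hp1] at hr
    simp at hr
    field_simp at hr ⊢
    linear_combination hr
  refine ⟨u / a, div_ne_zero hu ha, ?_⟩
  rw [hp1, hw]
  unfold lin
  rw [mul_add, ← mul_assoc, ← map_mul, ← map_mul, div_mul_cancel₀ _ ha]
  congr 1
  congr 1
  ring

/-- one-sided core step -/
lemma core1 {a : ℂ} (b : ℂ) {c : ℂ} (ha : a ≠ 0) (hc : c ≠ 0)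
    {K L : Polynomial ℂ} (hK : K ≠ 0) (hL : L ≠ 0)
    (hKd : K.degree ≤ 1) (hLd : L.degree ≤ 1)
    (E : Polynomial.C c * lin a b * (K + L) + (1 + Polynomial.C c) * (K * L) = 0)
    (hKα : K.eval (-b / a) = 0) :
    ∃ d e : ℂ, d ≠ 0 ∧ e ≠ 0 ∧ K = Polynomial.C d * lin a b ∧ L = Polynomial.C e * lin a b := by
  obtain ⟨d, hd, hKeq⟩ := scale b ha hKd hK hKα
  have hPE : lin a b * (Polynomial.C c * Polynomial.C d * lin a b
      + (Polynomial.C c + Polynomial.C d + Polynomial.C c * Polynomial.C d) * L) = 0 := by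
    linear_combination E - (Polynomial.C c * lin a b + (1 + Polynomial.C c) * L) * hKeq
  have h2 : Polynomial.C c * Polynomial.C d * lin a b
      + (Polynomial.C c + Polynomial.C d + Polynomial.C c * Polynomial.C d) * L = 0 :=
    (mul_eq_zero.mp hPE).resolve_left (lin_ne_zero b ha)
  rw [← map_mul, ← map_add, ← map_add] at h2
  by_cases hs : c + d + c * d = 0
  · rw [hs, map_zero, zero_mul, add_zero] at h2
    exact absurd h2 (mul_ne_zero (Polynomial.C_ne_zero.mpr (mul_ne_zero hc hd)) (lin_ne_zero b ha))
  · refine ⟨d, -(c * d) / (c + d + c * d), hd,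
      div_ne_zero (neg_ne_zero.mpr (mul_ne_zero hc hd)) hs, hKeq, ?_⟩
    apply mul_left_cancel₀ (show Polynomial.C (c + d + c * d) ≠ 0 from Polynomial.C_ne_zero.mpr hs)
    rw [← mul_assoc, ← map_mul]
    have hss : (c + d + c * d) * (-(c * d) / (c + d + c * d)) = -(c * d) := by field_simp
    rw [hss, map_neg]
    linear_combination h2

lemma core {a : ℂ} (b : ℂ) {c : ℂ} (ha : a ≠ 0) (hc : c ≠ 0) (hc1 : 1 + c ≠ 0)
    {K L : Polynomial ℂ} (hK : K ≠ 0) (hL : L ≠ 0)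
    (hKd : K.degree ≤ 1) (hLd : L.degree ≤ 1)
    (E : Polynomial.C c * lin a b * (K + L) + (1 + Polynomial.C c) * (K * L) = 0) :
    ∃ d e : ℂ, d ≠ 0 ∧ e ≠ 0 ∧ K = Polynomial.C d * lin a b ∧ L = Polynomial.C e * lin a b := by
  have hev := congrArg (Polynomial.eval (-b / a)) E
  simp only [Polynomial.eval_add, Polynomial.eval_mul, Polynomial.eval_one, Polynomial.eval_C,
    lin_root b ha, Polynomial.eval_zero, mul_zero, zero_mul, zero_add, add_zero] at hev
  have h3 : (1 + c) * (K.eval (-b / a) * L.eval (-b / a)) = 0 := by linear_combination hev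
  rcases mul_eq_zero.mp ((mul_eq_zero.mp h3).resolve_left hc1) with h | h
  · exact core1 b ha hc hK hL hKd hLd E h
  · obtain ⟨d, e, hd, he, h1, h2⟩ := core1 b ha hc hL hK hLd hKd (by linear_combination E) h
    exact ⟨e, d, he, hd, h2, h1⟩

lemma mid1 {a : ℂ} (b : ℂ) (ha : a ≠ 0) {Q K L : Polynomial ℂ}
    (hQ : Q ≠ 0) (hK : K ≠ 0) (hL : L ≠ 0)
    (hQd : Q.degree ≤ 1) (hKd : K.degree ≤ 1) (hLd : L.degree ≤ 1)
    (hsQ : lin a b + Q ≠ 0)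
    (hq : lin a b * Q * K + lin a b * Q * L + lin a b * K * L + Q * K * L = 0)
    (hQα : Q.eval (-b / a) = 0) :
    ∃ cQ cK cL : ℂ, cQ ≠ 0 ∧ cK ≠ 0 ∧ cL ≠ 0 ∧ Q = Polynomial.C cQ * lin a b ∧
      K = Polynomial.C cK * lin a b ∧ L = Polynomial.C cL * lin a b := by
  obtain ⟨c, hc, hQeq⟩ := scale b ha hQd hQ hQα
  have hc1 : 1 + c ≠ 0 := by
    intro h
    apply hsQ
    have : lin a b + Q = Polynomial.C (1 + c) * lin a b := by
      rw [hQeq, map_add, map_one]; ring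
    rw [this, h, map_zero, zero_mul]
  have hPE : lin a b * (Polynomial.C c * lin a b * (K + L)
      + (1 + Polynomial.C c) * (K * L)) = 0 := by
    linear_combination hq - (lin a b * K + lin a b * L + K * L) * hQeq
  have E := (mul_eq_zero.mp hPE).resolve_left (lin_ne_zero b ha)
  obtain ⟨d, e, hd, he, h1, h2⟩ := core b ha hc hc1 hK hL hKd hLd E
  exact ⟨c, d, e, hc, hd, he, hQeq, h1, h2⟩

lemma mid {a : ℂ} (b : ℂ) (ha : a ≠ 0) {Q K L : Polynomial ℂ}
    (hQ : Q ≠ 0) (hK : K ≠ 0) (hL : L ≠ 0)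
    (hQd : Q.degree ≤ 1) (hKd : K.degree ≤ 1) (hLd : L.degree ≤ 1)
    (hsQ : lin a b + Q ≠ 0) (hsK : lin a b + K ≠ 0) (hsL : lin a b + L ≠ 0)
    (hq : lin a b * Q * K + lin a b * Q * L + lin a b * K * L + Q * K * L = 0) :
    ∃ cQ cK cL : ℂ, cQ ≠ 0 ∧ cK ≠ 0 ∧ cL ≠ 0 ∧ Q = Polynomial.C cQ * lin a b ∧
      K = Polynomial.C cK * lin a b ∧ L = Polynomial.C cL * lin a b := by
  have hev := congrArg (Polynomial.eval (-b / a)) hq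
  simp only [Polynomial.eval_add, Polynomial.eval_mul, lin_root b ha, Polynomial.eval_zero,
    mul_zero, zero_mul, zero_add, add_zero] at hev
  rcases mul_eq_zero.mp hev with h | h
  · rcases mul_eq_zero.mp h with h' | h'
    · exact mid1 b ha hQ hK hL hQd hKd hLd hsQ hq h'
    · obtain ⟨cK, cQ, cL, h1, h2, h3, e1, e2, e3⟩ :=
        mid1 b ha hK hQ hL hKd hQd hLd hsK (by linear_combination hq) h'
      exact ⟨cQ, cK, cL, h2, h1, h3, e2, e1, e3⟩
  · obtain ⟨cL, cQ, cK, h1, h2, h3, e1, e2, e3⟩ :=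
      mid1 b ha hL hQ hK hLd hQd hKd hsL (by linear_combination hq) h
    exact ⟨cQ, cK, cL, h2, h3, h1, e2, e3, e1⟩

lemma key {p : Fin 4 → Polynomial ℂ} (hdeg : ∀ i, (p i).degree ≤ 1)
    (hq : p 0 * p 1 * p 2 + p 0 * p 1 * p 3 + p 0 * p 2 * p 3 + p 1 * p 2 * p 3 = 0)
    (hprop : ¬ ∃ (P : Polynomial ℂ) (lam : Fin 4 → ℂ), ∀ m, p m = Polynomial.C (lam m) * P) :
    (∃ i j, i ≠ j ∧ p i = 0 ∧ p j = 0) ∨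
      (p 0 + p 1 = 0 ∧ p 2 + p 3 = 0) ∨ (p 0 + p 2 = 0 ∧ p 1 + p 3 = 0) ∨
      (p 0 + p 3 = 0 ∧ p 1 + p 2 = 0) := by
  by_cases hz : ∃ i j, i ≠ j ∧ p i = 0 ∧ p j = 0
  · exact Or.inl hz
  push_neg at hz
  have hnz : ∀ i, p i ≠ 0 := by
    intro i h0
    fin_cases i
    · have h0 : p 0 = 0 := h0
      have h' : p 1 * p 2 * p 3 = 0 := by
        linear_combination hq - (p 1 * p 2 + p 1 * p 3 + p 2 * p 3) * h0
      rcases mul_eq_zero.mp h' with h'' | h''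
      rcases mul_eq_zero.mp h'' with h3 | h3
      · exact hz 0 1 (by decide) h0 h3
      · exact hz 0 2 (by decide) h0 h3
      · exact hz 0 3 (by decide) h0 h''
    · have h0 : p 1 = 0 := h0
      have h' : p 0 * p 2 * p 3 = 0 := by
        linear_combination hq - (p 0 * p 2 + p 0 * p 3 + p 2 * p 3) * h0
      rcases mul_eq_zero.mp h' with h'' | h''
      rcases mul_eq_zero.mp h'' with h3 | h3
      · exact hz 1 0 (by decide) h0 h3
      · exact hz 1 2 (by decide) h0 h3
      · exact hz 1 3 (by decide) h0 h''
    · have h0 : p 2 = 0 := h0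
      have h' : p 0 * p 1 * p 3 = 0 := by
        linear_combination hq - (p 0 * p 1 + p 0 * p 3 + p 1 * p 3) * h0
      rcases mul_eq_zero.mp h' with h'' | h''
      rcases mul_eq_zero.mp h'' with h3 | h3
      · exact hz 2 0 (by decide) h0 h3
      · exact hz 2 1 (by decide) h0 h3
      · exact hz 2 3 (by decide) h0 h''
    · have h0 : p 3 = 0 := h0
      have h' : p 0 * p 1 * p 2 = 0 := by
        linear_combination hq - (p 0 * p 1 + p 0 * p 2 + p 1 * p 2) * h0
      rcases mul_eq_zero.mp h' with h'' | h''
      rcases mul_eq_zero.mp h'' with h3 | h3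
      · exact hz 3 0 (by decide) h0 h3
      · exact hz 3 1 (by decide) h0 h3
      · exact hz 3 2 (by decide) h0 h''
  by_cases h01 : p 0 + p 1 = 0
  · refine Or.inr (Or.inl ⟨h01, ?_⟩)
    have h' : p 0 * p 1 * (p 2 + p 3) = 0 := by linear_combination hq - p 2 * p 3 * h01
    exact (mul_eq_zero.mp h').resolve_left (mul_ne_zero (hnz 0) (hnz 1))
  by_cases h23 : p 2 + p 3 = 0
  · refine Or.inr (Or.inl ⟨?_, h23⟩)
    have h' : p 2 * p 3 * (p 0 + p 1) = 0 := by linear_combination hq - p 0 * p 1 * h23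
    exact (mul_eq_zero.mp h').resolve_left (mul_ne_zero (hnz 2) (hnz 3))
  by_cases h02 : p 0 + p 2 = 0
  · refine Or.inr (Or.inr (Or.inl ⟨h02, ?_⟩))
    have h' : p 0 * p 2 * (p 1 + p 3) = 0 := by linear_combination hq - p 1 * p 3 * h02
    exact (mul_eq_zero.mp h').resolve_left (mul_ne_zero (hnz 0) (hnz 2))
  by_cases h13 : p 1 + p 3 = 0
  · refine Or.inr (Or.inr (Or.inl ⟨?_, h13⟩))
    have h' : p 1 * p 3 * (p 0 + p 2) = 0 := by linear_combination hq - p 0 * p 2 * h13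
    exact (mul_eq_zero.mp h').resolve_left (mul_ne_zero (hnz 1) (hnz 3))
  by_cases h03 : p 0 + p 3 = 0
  · refine Or.inr (Or.inr (Or.inr ⟨h03, ?_⟩))
    have h' : p 0 * p 3 * (p 1 + p 2) = 0 := by linear_combination hq - p 1 * p 2 * h03
    exact (mul_eq_zero.mp h').resolve_left (mul_ne_zero (hnz 0) (hnz 3))
  by_cases h12 : p 1 + p 2 = 0
  · refine Or.inr (Or.inr (Or.inr ⟨?_, h12⟩))
    have h' : p 1 * p 2 * (p 0 + p 3) = 0 := by linear_combination hq - p 0 * p 3 * h12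
    exact (mul_eq_zero.mp h').resolve_left (mul_ne_zero (hnz 1) (hnz 2))
  exfalso
  obtain ⟨i, hi⟩ : ∃ i, (p i).coeff 1 ≠ 0 := by
    by_contra h
    push_neg at h
    exact hprop ⟨1, fun m => (p m).coeff 0, fun m => by
      have := Polynomial.eq_X_add_C_of_degree_le_one (hdeg m)
      rw [h m] at this
      simpa using this⟩
  fin_cases i
  · have hi : (p 0).coeff 1 ≠ 0 := hi
    have hPi : p 0 = lin ((p 0).coeff 1) ((p 0).coeff 0) := by
      unfold lin; exact Polynomial.eq_X_add_C_of_degree_le_one (hdeg 0)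
    obtain ⟨c1, c2, c3, n1, n2, n3, e1, e2, e3⟩ :=
      mid (a := (p 0).coeff 1) ((p 0).coeff 0) hi (hnz 1) (hnz 2) (hnz 3)
        (hdeg 1) (hdeg 2) (hdeg 3)
        (by rw [← hPi]; exact h01) (by rw [← hPi]; exact h02) (by rw [← hPi]; exact h03)
        (by rw [← hPi] ; linear_combination hq)
    exact hprop ⟨lin ((p 0).coeff 1) ((p 0).coeff 0), ![1, c1, c2, c3], by
      intro m; fin_cases m
      · simpa using hPi
      · simpa using e1
      · simpa using e2
      · simpa using e3⟩
  · have hi : (p 1).coeff 1 ≠ 0 := hi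
    have hPi : p 1 = lin ((p 1).coeff 1) ((p 1).coeff 0) := by
      unfold lin; exact Polynomial.eq_X_add_C_of_degree_le_one (hdeg 1)
    obtain ⟨c1, c2, c3, n1, n2, n3, e1, e2, e3⟩ :=
      mid (a := (p 1).coeff 1) ((p 1).coeff 0) hi (hnz 0) (hnz 2) (hnz 3)
        (hdeg 0) (hdeg 2) (hdeg 3)
        (by rw [← hPi]; intro h; exact h01 (by linear_combination h))
        (by rw [← hPi]; exact h12) (by rw [← hPi]; exact h13)
        (by rw [← hPi]; linear_combination hq)
    exact hprop ⟨lin ((p 1).coeff 1) ((p 1).coeff 0), ![c1, 1, c2, c3], by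
      intro m; fin_cases m
      · simpa using e1
      · simpa using hPi
      · simpa using e2
      · simpa using e3⟩
  · have hi : (p 2).coeff 1 ≠ 0 := hi
    have hPi : p 2 = lin ((p 2).coeff 1) ((p 2).coeff 0) := by
      unfold lin; exact Polynomial.eq_X_add_C_of_degree_le_one (hdeg 2)
    obtain ⟨c1, c2, c3, n1, n2, n3, e1, e2, e3⟩ :=
      mid (a := (p 2).coeff 1) ((p 2).coeff 0) hi (hnz 0) (hnz 1) (hnz 3)
        (hdeg 0) (hdeg 1) (hdeg 3)
        (by rw [← hPi]; intro h; exact h02 (by linear_combination h))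
        (by rw [← hPi]; intro h; exact h12 (by linear_combination h))
        (by rw [← hPi]; exact h23)
        (by rw [← hPi]; linear_combination hq)
    exact hprop ⟨lin ((p 2).coeff 1) ((p 2).coeff 0), ![c1, c2, 1, c3], by
      intro m; fin_cases m
      · simpa using e1
      · simpa using e2
      · simpa using hPi
      · simpa using e3⟩
  · have hi : (p 3).coeff 1 ≠ 0 := hi
    have hPi : p 3 = lin ((p 3).coeff 1) ((p 3).coeff 0) := by
      unfold lin; exact Polynomial.eq_X_add_C_of_degree_le_one (hdeg 3)
    obtain ⟨c1, c2, c3, n1, n2, n3, e1, e2, e3⟩ :=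
      mid (a := (p 3).coeff 1) ((p 3).coeff 0) hi (hnz 0) (hnz 1) (hnz 2)
        (hdeg 0) (hdeg 1) (hdeg 2)
        (by rw [← hPi]; intro h; exact h03 (by linear_combination h))
        (by rw [← hPi]; intro h; exact h13 (by linear_combination h))
        (by rw [← hPi]; intro h; exact h23 (by linear_combination h))
        (by rw [← hPi]; linear_combination hq)
    exact hprop ⟨lin ((p 3).coeff 1) ((p 3).coeff 0), ![c1, c2, c3, 1], by
      intro m; fin_cases m
      · simpa using e1
      · simpa using e2
      · simpa using e3
      · simpa using hPi⟩


/-! ### span helpers -/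

lemma span_pair_finrank_le (x y : Fin 4 → ℂ) :
    Module.finrank ℂ (Submodule.span ℂ ({x, y} : Set (Fin 4 → ℂ))) ≤ 2 := by
  have h := finrank_range_le_card (R := ℂ) ![x, y]
  have hr : Set.range ![x, y] = {x, y} := by
    simp [Matrix.range_cons, Matrix.range_empty, Set.pair_comm y x]
  rw [Set.finrank, hr] at h
  simpa using h

lemma eq_span_pair {W : Submodule ℂ (Fin 4 → ℂ)} (hW : Module.finrank ℂ W = 2)
    {u w x y : Fin 4 → ℂ} (hWs : W = Submodule.span ℂ {u, w})
    (hu : u ∈ Submodule.span ℂ ({x, y} : Set (Fin 4 → ℂ)))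
    (hw : w ∈ Submodule.span ℂ ({x, y} : Set (Fin 4 → ℂ))) :
    W = Submodule.span ℂ {x, y} := by
  apply Submodule.eq_of_le_of_finrank_le
  · rw [hWs, Submodule.span_le]
    intro v hv
    simp only [Set.mem_insert_iff, Set.mem_singleton_iff] at hv
    rcases hv with rfl | rfl
    · exact hu
    · exact hw
  · rw [hW]; exact span_pair_finrank_le x y

lemma mem_pair01 {x : Fin 4 → ℂ} (h1 : x 2 = 0) (h2 : x 3 = 0) :
    x ∈ Submodule.span ℂ ({e 0, e 1} : Set (Fin 4 → ℂ)) := by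
  refine Submodule.mem_span_pair.mpr ⟨x 0, x 1, ?_⟩
  funext m
  fin_cases m <;> simp [e, Pi.single_apply, h1, h2]

lemma mem_pair02 {x : Fin 4 → ℂ} (h1 : x 1 = 0) (h2 : x 3 = 0) :
    x ∈ Submodule.span ℂ ({e 0, e 2} : Set (Fin 4 → ℂ)) := by
  refine Submodule.mem_span_pair.mpr ⟨x 0, x 2, ?_⟩
  funext m
  fin_cases m <;> simp [e, Pi.single_apply, h1, h2]

lemma mem_pair03 {x : Fin 4 → ℂ} (h1 : x 1 = 0) (h2 : x 2 = 0) :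
    x ∈ Submodule.span ℂ ({e 0, e 3} : Set (Fin 4 → ℂ)) := by
  refine Submodule.mem_span_pair.mpr ⟨x 0, x 3, ?_⟩
  funext m
  fin_cases m <;> simp [e, Pi.single_apply, h1, h2]

lemma mem_pair12 {x : Fin 4 → ℂ} (h1 : x 0 = 0) (h2 : x 3 = 0) :
    x ∈ Submodule.span ℂ ({e 1, e 2} : Set (Fin 4 → ℂ)) := by
  refine Submodule.mem_span_pair.mpr ⟨x 1, x 2, ?_⟩
  funext m
  fin_cases m <;> simp [e, Pi.single_apply, h1, h2]

lemma mem_pair13 {x : Fin 4 → ℂ} (h1 : x 0 = 0) (h2 : x 2 = 0) :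
    x ∈ Submodule.span ℂ ({e 1, e 3} : Set (Fin 4 → ℂ)) := by
  refine Submodule.mem_span_pair.mpr ⟨x 1, x 3, ?_⟩
  funext m
  fin_cases m <;> simp [e, Pi.single_apply, h1, h2]

lemma mem_pair23 {x : Fin 4 → ℂ} (h1 : x 0 = 0) (h2 : x 1 = 0) :
    x ∈ Submodule.span ℂ ({e 2, e 3} : Set (Fin 4 → ℂ)) := by
  refine Submodule.mem_span_pair.mpr ⟨x 2, x 3, ?_⟩
  funext m
  fin_cases m <;> simp [e, Pi.single_apply, h1, h2]

lemma mem_diag02 {x : Fin 4 → ℂ} (h1 : x 0 + x 2 = 0) (h2 : x 1 + x 3 = 0) :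
    x ∈ Submodule.span ℂ ({e 0 - e 2, e 1 - e 3} : Set (Fin 4 → ℂ)) := by
  refine Submodule.mem_span_pair.mpr ⟨x 0, x 1, ?_⟩
  funext m
  fin_cases m <;> simp [e, Pi.single_apply] <;>
    first | linear_combination -h1 | linear_combination -h2

lemma mem_diag01 {x : Fin 4 → ℂ} (h1 : x 0 + x 1 = 0) (h2 : x 2 + x 3 = 0) :
    x ∈ Submodule.span ℂ ({e 0 - e 1, e 2 - e 3} : Set (Fin 4 → ℂ)) := by
  refine Submodule.mem_span_pair.mpr ⟨x 0, x 2, ?_⟩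
  funext m
  fin_cases m <;> simp [e, Pi.single_apply] <;>
    first | linear_combination -h1 | linear_combination -h2

lemma mem_diag03 {x : Fin 4 → ℂ} (h1 : x 0 + x 3 = 0) (h2 : x 1 + x 2 = 0) :
    x ∈ Submodule.span ℂ ({e 0 - e 3, e 1 - e 2} : Set (Fin 4 → ℂ)) := by
  refine Submodule.mem_span_pair.mpr ⟨x 0, x 1, ?_⟩
  funext m
  fin_cases m <;> simp [e, Pi.single_apply] <;>
    first | linear_combination -h1 | linear_combination -h2



/-- The Cayley cubic contains exactly nine lines (2-dimensional subspaces `W ⊆ ℂ^4` on which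
the form vanishes identically): the six lines `e_ie_j` through pairs of coordinate points,
and the three further lines `{t₀+t₂ = t₁+t₃ = 0}`, `{t₀+t₁ = t₂+t₃ = 0}`,
`{t₀+t₃ = t₁+t₂ = 0}`. -/
theorem cayley_nine_lines (W : Submodule ℂ (Fin 4 → ℂ)) (hW : Module.finrank ℂ W = 2) :
    (∀ v ∈ W, eval v cayley = 0) ↔
      W ∈ ({Submodule.span ℂ {e 0, e 1}, Submodule.span ℂ {e 0, e 2},
            Submodule.span ℂ {e 0, e 3}, Submodule.span ℂ {e 1, e 2},
            Submodule.span ℂ {e 1, e 3}, Submodule.span ℂ {e 2, e 3},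
            Submodule.span ℂ {e 0 - e 2, e 1 - e 3},
            Submodule.span ℂ {e 0 - e 1, e 2 - e 3},
            Submodule.span ℂ {e 0 - e 3, e 1 - e 2}} : Set (Submodule ℂ (Fin 4 → ℂ))) := by
  constructor
  · intro hvan
    have B := Module.finBasisOfFinrankEq ℂ W hW
    set u : Fin 4 → ℂ := (B 0 : Fin 4 → ℂ) with hu
    set w : Fin 4 → ℂ := (B 1 : Fin 4 → ℂ) with hwdef
    have humem : u ∈ W := (B 0).2
    have hwmem : w ∈ W := (B 1).2
    have hli : LinearIndependent ℂ (W.subtype ∘ B) :=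
      B.linearIndependent.map' W.subtype W.ker_subtype
    have hpairli : LinearIndependent ℂ ![u, w] := by
      have : ![u, w] = W.subtype ∘ B := by
        funext i; fin_cases i <;> rfl
      rw [this]; exact hli
    have hpair : ∀ s t : ℂ, s • u + t • w = 0 → s = 0 ∧ t = 0 := by
      intro s t hst
      exact LinearIndependent.pair_iff.mp hpairli s t hst
    have hWs : W = Submodule.span ℂ {u, w} := by
      apply le_antisymm
      · intro v hv
        have hrep := B.sum_repr ⟨v, hv⟩
        rw [Fin.sum_univ_two] at hrep
        have : (B.repr ⟨v, hv⟩ 0) • u + (B.repr ⟨v, hv⟩ 1) • w = v := by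
          have := congrArg (fun z : W => (z : Fin 4 → ℂ)) hrep
          simpa only [Submodule.coe_add, SetLike.val_smul] using this
        exact Submodule.mem_span_pair.mpr ⟨_, _, this⟩
      · rw [Submodule.span_le]
        intro x hx
        simp only [Set.mem_insert_iff, Set.mem_singleton_iff] at hx
        rcases hx with rfl | rfl
        · exact humem
        · exact hwmem
    set p : Fin 4 → Polynomial ℂ := fun i => lin (u i) (w i) with hp
    have hdeg : ∀ i, (p i).degree ≤ 1 := fun i => Polynomial.degree_linear_le
    have hq : p 0 * p 1 * p 2 + p 0 * p 1 * p 3 + p 0 * p 2 * p 3 + p 1 * p 2 * p 3 = 0 := by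
      apply Polynomial.funext
      intro x
      have hv : (x • u + w) ∈ W := W.add_mem (W.smul_mem x humem) hwmem
      have h0 := hvan _ hv
      simp only [cayley, eval_add, eval_mul, eval_X, Pi.add_apply, Pi.smul_apply,
        smul_eq_mul] at h0
      simp only [hp, lin, Polynomial.eval_add, Polynomial.eval_mul, Polynomial.eval_C,
        Polynomial.eval_X, Polynomial.eval_zero]
      linear_combination h0
    have hprop : ¬ ∃ (P : Polynomial ℂ) (lam : Fin 4 → ℂ),
        ∀ m, p m = Polynomial.C (lam m) * P := by
      rintro ⟨P, lam, hlam⟩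
      have hum : ∀ m, u m = lam m * P.coeff 1 := by
        intro m
        have := congrArg (fun q => Polynomial.coeff q 1) (hlam m)
        simpa [hp, lin] using this
      have hwm : ∀ m, w m = lam m * P.coeff 0 := by
        intro m
        have := congrArg (fun q => Polynomial.coeff q 0) (hlam m)
        simpa [hp, lin] using this
      have h1 := hpair (P.coeff 0) (-(P.coeff 1)) (by
        funext m
        simp only [Pi.add_apply, Pi.smul_apply, smul_eq_mul, Pi.zero_apply, Pi.neg_apply,
          hum m, hwm m]
        ring)
      have hc1 : P.coeff 1 = 0 := neg_eq_zero.mp h1.2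
      have h2 := hpair 1 0 (by
        funext m
        simp [hum m, hc1])
      exact one_ne_zero h2.1
    simp only [Set.mem_insert_iff, Set.mem_singleton_iff]
    rcases key hdeg hq hprop with ⟨i, j, hij, hi, hj⟩ | ⟨h1, h2⟩ | ⟨h1, h2⟩ | ⟨h1, h2⟩
    · fin_cases i <;> fin_cases j
      · exact absurd rfl hij
      · have hi' : p 0 = 0 := hi
        have hj' : p 1 = 0 := hj
        have zi := lin_eq_zero_iff.mp hi'
        have zj := lin_eq_zero_iff.mp hj'
        have z1 : u 0 = 0 := zi.1
        have z2 : u 1 = 0 := zj.1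
        have z3 : w 0 = 0 := zi.2
        have z4 : w 1 = 0 := zj.2
        exact Or.inr (Or.inr (Or.inr (Or.inr (Or.inr (Or.inl (eq_span_pair hW hWs (mem_pair23 z1 z2) (mem_pair23 z3 z4)))))))
      · have hi' : p 0 = 0 := hi
        have hj' : p 2 = 0 := hj
        have zi := lin_eq_zero_iff.mp hi'
        have zj := lin_eq_zero_iff.mp hj'
        have z1 : u 0 = 0 := zi.1
        have z2 : u 2 = 0 := zj.1
        have z3 : w 0 = 0 := zi.2
        have z4 : w 2 = 0 := zj.2
        exact Or.inr (Or.inr (Or.inr (Or.inr (Or.inl (eq_span_pair hW hWs (mem_pair13 z1 z2) (mem_pair13 z3 z4))))))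
      · have hi' : p 0 = 0 := hi
        have hj' : p 3 = 0 := hj
        have zi := lin_eq_zero_iff.mp hi'
        have zj := lin_eq_zero_iff.mp hj'
        have z1 : u 0 = 0 := zi.1
        have z2 : u 3 = 0 := zj.1
        have z3 : w 0 = 0 := zi.2
        have z4 : w 3 = 0 := zj.2
        exact Or.inr (Or.inr (Or.inr (Or.inl (eq_span_pair hW hWs (mem_pair12 z1 z2) (mem_pair12 z3 z4)))))
      · have hi' : p 1 = 0 := hi
        have hj' : p 0 = 0 := hj
        have zi := lin_eq_zero_iff.mp hi'
        have zj := lin_eq_zero_iff.mp hj'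
        have z1 : u 0 = 0 := zj.1
        have z2 : u 1 = 0 := zi.1
        have z3 : w 0 = 0 := zj.2
        have z4 : w 1 = 0 := zi.2
        exact Or.inr (Or.inr (Or.inr (Or.inr (Or.inr (Or.inl (eq_span_pair hW hWs (mem_pair23 z1 z2) (mem_pair23 z3 z4)))))))
      · exact absurd rfl hij
      · have hi' : p 1 = 0 := hi
        have hj' : p 2 = 0 := hj
        have zi := lin_eq_zero_iff.mp hi'
        have zj := lin_eq_zero_iff.mp hj'
        have z1 : u 1 = 0 := zi.1
        have z2 : u 2 = 0 := zj.1
        have z3 : w 1 = 0 := zi.2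
        have z4 : w 2 = 0 := zj.2
        exact Or.inr (Or.inr (Or.inl (eq_span_pair hW hWs (mem_pair03 z1 z2) (mem_pair03 z3 z4))))
      · have hi' : p 1 = 0 := hi
        have hj' : p 3 = 0 := hj
        have zi := lin_eq_zero_iff.mp hi'
        have zj := lin_eq_zero_iff.mp hj'
        have z1 : u 1 = 0 := zi.1
        have z2 : u 3 = 0 := zj.1
        have z3 : w 1 = 0 := zi.2
        have z4 : w 3 = 0 := zj.2
        exact Or.inr (Or.inl (eq_span_pair hW hWs (mem_pair02 z1 z2) (mem_pair02 z3 z4)))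
      · have hi' : p 2 = 0 := hi
        have hj' : p 0 = 0 := hj
        have zi := lin_eq_zero_iff.mp hi'
        have zj := lin_eq_zero_iff.mp hj'
        have z1 : u 0 = 0 := zj.1
        have z2 : u 2 = 0 := zi.1
        have z3 : w 0 = 0 := zj.2
        have z4 : w 2 = 0 := zi.2
        exact Or.inr (Or.inr (Or.inr (Or.inr (Or.inl (eq_span_pair hW hWs (mem_pair13 z1 z2) (mem_pair13 z3 z4))))))
      · have hi' : p 2 = 0 := hi
        have hj' : p 1 = 0 := hj
        have zi := lin_eq_zero_iff.mp hi'
        have zj := lin_eq_zero_iff.mp hj'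
        have z1 : u 1 = 0 := zj.1
        have z2 : u 2 = 0 := zi.1
        have z3 : w 1 = 0 := zj.2
        have z4 : w 2 = 0 := zi.2
        exact Or.inr (Or.inr (Or.inl (eq_span_pair hW hWs (mem_pair03 z1 z2) (mem_pair03 z3 z4))))
      · exact absurd rfl hij
      · have hi' : p 2 = 0 := hi
        have hj' : p 3 = 0 := hj
        have zi := lin_eq_zero_iff.mp hi'
        have zj := lin_eq_zero_iff.mp hj'
        have z1 : u 2 = 0 := zi.1
        have z2 : u 3 = 0 := zj.1
        have z3 : w 2 = 0 := zi.2
        have z4 : w 3 = 0 := zj.2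
        exact Or.inl (eq_span_pair hW hWs (mem_pair01 z1 z2) (mem_pair01 z3 z4))
      · have hi' : p 3 = 0 := hi
        have hj' : p 0 = 0 := hj
        have zi := lin_eq_zero_iff.mp hi'
        have zj := lin_eq_zero_iff.mp hj'
        have z1 : u 0 = 0 := zj.1
        have z2 : u 3 = 0 := zi.1
        have z3 : w 0 = 0 := zj.2
        have z4 : w 3 = 0 := zi.2
        exact Or.inr (Or.inr (Or.inr (Or.inl (eq_span_pair hW hWs (mem_pair12 z1 z2) (mem_pair12 z3 z4)))))
      · have hi' : p 3 = 0 := hi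
        have hj' : p 1 = 0 := hj
        have zi := lin_eq_zero_iff.mp hi'
        have zj := lin_eq_zero_iff.mp hj'
        have z1 : u 1 = 0 := zj.1
        have z2 : u 3 = 0 := zi.1
        have z3 : w 1 = 0 := zj.2
        have z4 : w 3 = 0 := zi.2
        exact Or.inr (Or.inl (eq_span_pair hW hWs (mem_pair02 z1 z2) (mem_pair02 z3 z4)))
      · have hi' : p 3 = 0 := hi
        have hj' : p 2 = 0 := hj
        have zi := lin_eq_zero_iff.mp hi'
        have zj := lin_eq_zero_iff.mp hj'
        have z1 : u 2 = 0 := zj.1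
        have z2 : u 3 = 0 := zi.1
        have z3 : w 2 = 0 := zj.2
        have z4 : w 3 = 0 := zi.2
        exact Or.inl (eq_span_pair hW hWs (mem_pair01 z1 z2) (mem_pair01 z3 z4))
      · exact absurd rfl hij
    · -- p 0 + p 1 = 0 and p 2 + p 3 = 0
      have z1 := lin_add_eq_zero h1
      have z2 := lin_add_eq_zero h2
      exact Or.inr (Or.inr (Or.inr (Or.inr (Or.inr (Or.inr (Or.inr (Or.inl (eq_span_pair hW hWs (mem_diag01 z1.1 z2.1) (mem_diag01 z1.2 z2.2)))))))))
    · -- p 0 + p 2 = 0 and p 1 + p 3 = 0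
      have z1 := lin_add_eq_zero h1
      have z2 := lin_add_eq_zero h2
      exact Or.inr (Or.inr (Or.inr (Or.inr (Or.inr (Or.inr (Or.inl (eq_span_pair hW hWs (mem_diag02 z1.1 z2.1) (mem_diag02 z1.2 z2.2))))))))
    · -- p 0 + p 3 = 0 and p 1 + p 2 = 0
      have z1 := lin_add_eq_zero h1
      have z2 := lin_add_eq_zero h2
      exact Or.inr (Or.inr (Or.inr (Or.inr (Or.inr (Or.inr (Or.inr (Or.inr (eq_span_pair hW hWs (mem_diag03 z1.1 z2.1) (mem_diag03 z1.2 z2.2)))))))))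
  · intro h
    simp only [Set.mem_insert_iff, Set.mem_singleton_iff] at h
    rcases h with rfl | rfl | rfl | rfl | rfl | rfl | rfl | rfl | rfl
    · intro v hv
      rw [Submodule.mem_span_pair] at hv
      obtain ⟨s, t, rfl⟩ := hv
      simp [cayley, e, Pi.single_apply]
      try ring
    · intro v hv
      rw [Submodule.mem_span_pair] at hv
      obtain ⟨s, t, rfl⟩ := hv
      simp [cayley, e, Pi.single_apply]
      try ring
    · intro v hv
      rw [Submodule.mem_span_pair] at hv
      obtain ⟨s, t, rfl⟩ := hv
      simp [cayley, e, Pi.single_apply]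
      try ring
    · intro v hv
      rw [Submodule.mem_span_pair] at hv
      obtain ⟨s, t, rfl⟩ := hv
      simp [cayley, e, Pi.single_apply]
      try ring
    · intro v hv
      rw [Submodule.mem_span_pair] at hv
      obtain ⟨s, t, rfl⟩ := hv
      simp [cayley, e, Pi.single_apply]
      try ring
    · intro v hv
      rw [Submodule.mem_span_pair] at hv
      obtain ⟨s, t, rfl⟩ := hv
      simp [cayley, e, Pi.single_apply]
      try ring
    · intro v hv
      rw [Submodule.mem_span_pair] at hv
      obtain ⟨s, t, rfl⟩ := hv
      simp [cayley, e, Pi.single_apply]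
      try ring
    · intro v hv
      rw [Submodule.mem_span_pair] at hv
      obtain ⟨s, t, rfl⟩ := hv
      simp [cayley, e, Pi.single_apply]
      try ring
    · intro v hv
      rw [Submodule.mem_span_pair] at hv
      obtain ⟨s, t, rfl⟩ := hv
      simp [cayley, e, Pi.single_apply]
      try ring
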